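/- Let m ≥ 4 and let 𝔫 be the (2m+2)-dimensional Lie algebra 𝔤^{4,1}_{(m,m−1)} + ψ̄_{2,2m−5}, i.e., 𝔤^{4,1}_{(m,m−1)} with the additional brackets [X₂,X₃] = X_{2m−1} and [X₂,X₄] = X_{2m}. Let f be the linear endomorphism of 𝔫 given by f(X₁) = X₁, f(X₂) = (2m−4)X₂, f(X_j) = (2m−6+j)X_j for 3 ≤ j ≤ 2m, f(X_{2m+1}) = (6m−11)X_{2m+1}, f(X_{2m+2}) = (6m−10)X_{2m+2}. Then f is a derivation of 𝔫, and the semidirect product 𝔯^{4,1,2m−5}_{(m,m−1)} = 𝔫 ⋊ ℂf is a (2m+3)-dimensional solvable, non-nilpotent Lie algebra whose nilradical is 𝔫: the ideal spanned by X₁,…,X_{2m+2} is nilpotent, contains every nilpotent ideal of 𝔯^{4,1,2m−5}_{(m,m−1)}, and is isomorphic as a Lie algebra to 𝔫. -/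

import Mathlib

open Module

/-- The `i`-th basis vector (1-indexed); `0` when out of range. -/
noncomputable def basisVec {L : Type} [AddCommGroup L] [Module ℂ L] {n : ℕ}
    (b : Basis (Fin n) ℂ L) (i : ℕ) : L :=
  if h : 1 ≤ i ∧ i ≤ n then b ⟨i - 1, by omega⟩ else 0

/-- `b` realizes the structure constants of `𝔫 = 𝔤^{4,1}_{(m,m-1)} + ψ̄_{2,2m-5}`
(1-indexed basis `X₁,…,X_{2m+2}`): `[X₁,Xⱼ] = X_{j+1}` for `2 ≤ j ≤ 2m-1`,
`[X₁,X_{2m+1}] = X_{2m+2}`, `[X₂,X₃] = X_{2m-1}`, `[X₂,X₄] = X_{2m}`,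
`[Xⱼ,X_{2m+1-j}] = (-1)ʲ X_{2m+1}` and `[Xⱼ,X_{2m+2-j}] = (-1)ʲ (m+1-j) X_{2m+2}`
for `2 ≤ j ≤ m`, all other brackets of basis vectors being zero up to antisymmetry. -/
def IsNBasis {L : Type} [LieRing L] [LieAlgebra ℂ L] (m : ℕ)
    (b : Basis (Fin (2 * m + 2)) ℂ L) : Prop :=
  ∀ a c : ℕ, a < c →
    ⁅basisVec b a, basisVec b c⁆ =
      (if a = 1 ∧ 2 ≤ c ∧ c ≤ 2 * m - 1 then basisVec b (c + 1) else 0) +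
      (if a = 1 ∧ c = 2 * m + 1 then basisVec b (2 * m + 2) else 0) +
      (if a = 2 ∧ c = 3 then basisVec b (2 * m - 1) else 0) +
      (if a = 2 ∧ c = 4 then basisVec b (2 * m) else 0) +
      (if 2 ≤ a ∧ a ≤ m ∧ a + c = 2 * m + 1 then
        ((-1 : ℂ)) ^ a • basisVec b (2 * m + 1) else 0) +
      (if 2 ≤ a ∧ a ≤ m ∧ a + c = 2 * m + 2 then
        (((-1 : ℂ)) ^ a * ((m + 1 - a : ℕ) : ℂ)) • basisVec b (2 * m + 2) else 0)

/-- The diagonal endomorphism `f` of `𝔫`: `f(X₁) = X₁`, `f(X₂) = (2m-4)X₂`,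
`f(Xⱼ) = (2m-6+j)Xⱼ` for `3 ≤ j ≤ 2m`, `f(X_{2m+1}) = (6m-11)X_{2m+1}`,
`f(X_{2m+2}) = (6m-10)X_{2m+2}`. -/
noncomputable def fTorus17 {L : Type} [LieRing L] [LieAlgebra ℂ L] (m : ℕ)
    (b : Basis (Fin (2 * m + 2)) ℂ L) : L →ₗ[ℂ] L :=
  b.constr ℂ (fun v : Fin (2 * m + 2) =>
    if v.val = 0 then b v
    else if v.val = 1 then ((2 * m - 4 : ℕ) : ℂ) • b v
    else if v.val ≤ 2 * m - 1 then ((2 * m - 5 + v.val : ℕ) : ℂ) • b v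
    else if v.val = 2 * m then ((6 * m - 11 : ℕ) : ℂ) • b v
    else ((6 * m - 10 : ℕ) : ℂ) • b v)

noncomputable def eig17 (m i : ℕ) : ℂ :=
  if i = 1 then 1
  else if 2 ≤ i ∧ i ≤ 2 * m then ((2 * m - 6 + i : ℕ) : ℂ)
  else if i = 2 * m + 1 then ((6 * m - 11 : ℕ) : ℂ)
  else if i = 2 * m + 2 then ((6 * m - 10 : ℕ) : ℂ)
  else 0

section Aux
variable {L : Type} [LieRing L] [LieAlgebra ℂ L] {m : ℕ} (b : Basis (Fin (2 * m + 2)) ℂ L)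

lemma basisVec_eq (i : ℕ) (h1 : 1 ≤ i) (h2 : i ≤ 2 * m + 2) :
    basisVec b i = b ⟨i - 1, by omega⟩ := dif_pos ⟨h1, h2⟩

lemma basisVec_fin (i : Fin (2 * m + 2)) : basisVec b (i.val + 1) = b i := by
  rw [basisVec_eq b _ (by omega) (by omega)]
  congr 1

lemma eig17_one : eig17 m 1 = 1 := by unfold eig17; rw [if_pos rfl]

lemma eig17_mid (i : ℕ) (h1 : 2 ≤ i) (h2 : i ≤ 2 * m) :
    eig17 m i = ((2 * m - 6 + i : ℕ) : ℂ) := by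
  unfold eig17; rw [if_neg (by omega), if_pos ⟨h1, h2⟩]

lemma eig17_snd (hm : 4 ≤ m) : eig17 m (2 * m + 1) = ((6 * m - 11 : ℕ) : ℂ) := by
  unfold eig17; rw [if_neg (by omega), if_neg (by omega), if_pos rfl]

lemma eig17_last (hm : 4 ≤ m) : eig17 m (2 * m + 2) = ((6 * m - 10 : ℕ) : ℂ) := by
  unfold eig17; rw [if_neg (by omega), if_neg (by omega), if_neg (by omega), if_pos rfl]

lemma fT_bv (hm : 4 ≤ m) (i : ℕ) (h1 : 1 ≤ i) (h2 : i ≤ 2 * m + 2) :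
    fTorus17 m b (basisVec b i) = eig17 m i • basisVec b i := by
  rw [basisVec_eq b i h1 h2]
  simp only [fTorus17]
  rw [Basis.constr_basis]
  have hv : ((⟨i - 1, by omega⟩ : Fin (2 * m + 2)) : ℕ) = i - 1 := rfl
  by_cases e1 : i = 1
  · subst e1
    rw [if_pos (by omega), eig17_one, one_smul]
  · rw [if_neg (by omega)]
    by_cases e2 : i = 2
    · subst e2
      rw [if_pos (by omega), eig17_mid 2 le_rfl (by omega)]
      congr 1
      norm_cast
      omega
    · rw [if_neg (by omega)]
      by_cases e3 : i ≤ 2 * m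
      · rw [if_pos (by omega), eig17_mid i (by omega) e3]
        congr 1
        norm_cast
        omega
      · rw [if_neg (by omega)]
        by_cases e4 : i = 2 * m + 1
        · subst e4
          rw [if_pos (by omega), eig17_snd hm]
        · rw [if_neg (by omega)]
          have : i = 2 * m + 2 := by omega
          subst this
          rw [eig17_last hm]

end Aux

section Aux2
variable {L : Type} [LieRing L] [LieAlgebra ℂ L] {m : ℕ} (b : Basis (Fin (2 * m + 2)) ℂ L)

lemma lie_eig (hm : 4 ≤ m) (hb : IsNBasis m b) (a c : ℕ) (h : a < c) :
    fTorus17 m b ⁅basisVec b a, basisVec b c⁆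
      = (eig17 m a + eig17 m c) • ⁅basisVec b a, basisVec b c⁆ := by
  have key : ∀ (p : Prop) [Decidable p] (x : L),
      (p → fTorus17 m b x = (eig17 m a + eig17 m c) • x) →
      fTorus17 m b (if p then x else 0) = (eig17 m a + eig17 m c) • (if p then x else 0) := by
    intro p _ x hx
    split_ifs with hp
    · exact hx hp
    · simp
  have h1 : fTorus17 m b (if a = 1 ∧ 2 ≤ c ∧ c ≤ 2 * m - 1 then basisVec b (c + 1) else 0)
      = (eig17 m a + eig17 m c) • (if a = 1 ∧ 2 ≤ c ∧ c ≤ 2 * m - 1 then basisVec b (c + 1) else 0) := by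
    refine key _ _ fun hc => ?_
    obtain ⟨ha, hc2, hc3⟩ := hc
    subst ha
    rw [fT_bv b hm (c + 1) (by omega) (by omega), eig17_one,
      eig17_mid (c + 1) (by omega) (by omega), eig17_mid c hc2 (by omega),
      show 2 * m - 6 + (c + 1) = (2 * m - 6 + c) + 1 by omega, Nat.cast_add, Nat.cast_one,
      add_comm ((2 * m - 6 + c : ℕ) : ℂ) 1]
  have h2 : fTorus17 m b (if a = 1 ∧ c = 2 * m + 1 then basisVec b (2 * m + 2) else 0)
      = (eig17 m a + eig17 m c) • (if a = 1 ∧ c = 2 * m + 1 then basisVec b (2 * m + 2) else 0) := by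
    refine key _ _ fun hc => ?_
    obtain ⟨ha, hc2⟩ := hc
    subst ha; subst hc2
    rw [fT_bv b hm (2 * m + 2) (by omega) (by omega), eig17_one, eig17_snd hm, eig17_last hm,
      show 6 * m - 10 = (6 * m - 11) + 1 by omega, Nat.cast_add, Nat.cast_one,
      add_comm ((6 * m - 11 : ℕ) : ℂ) 1]
  have h3 : fTorus17 m b (if a = 2 ∧ c = 3 then basisVec b (2 * m - 1) else 0)
      = (eig17 m a + eig17 m c) • (if a = 2 ∧ c = 3 then basisVec b (2 * m - 1) else 0) := by
    refine key _ _ fun hc => ?_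
    obtain ⟨ha, hc2⟩ := hc
    subst ha; subst hc2
    rw [fT_bv b hm (2 * m - 1) (by omega) (by omega), eig17_mid (2 * m - 1) (by omega) (by omega),
      eig17_mid 2 (by omega) (by omega), eig17_mid 3 (by omega) (by omega),
      show 2 * m - 6 + (2 * m - 1) = (2 * m - 6 + 2) + (2 * m - 6 + 3) by omega, Nat.cast_add]
  have h4 : fTorus17 m b (if a = 2 ∧ c = 4 then basisVec b (2 * m) else 0)
      = (eig17 m a + eig17 m c) • (if a = 2 ∧ c = 4 then basisVec b (2 * m) else 0) := by
    refine key _ _ fun hc => ?_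
    obtain ⟨ha, hc2⟩ := hc
    subst ha; subst hc2
    rw [fT_bv b hm (2 * m) (by omega) (by omega), eig17_mid (2 * m) (by omega) (by omega),
      eig17_mid 2 (by omega) (by omega), eig17_mid 4 (by omega) (by omega),
      show 2 * m - 6 + 2 * m = (2 * m - 6 + 2) + (2 * m - 6 + 4) by omega, Nat.cast_add]
  have h5 : fTorus17 m b (if 2 ≤ a ∧ a ≤ m ∧ a + c = 2 * m + 1 then
        ((-1 : ℂ)) ^ a • basisVec b (2 * m + 1) else 0)
      = (eig17 m a + eig17 m c) • (if 2 ≤ a ∧ a ≤ m ∧ a + c = 2 * m + 1 then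
        ((-1 : ℂ)) ^ a • basisVec b (2 * m + 1) else 0) := by
    refine key _ _ fun hc => ?_
    obtain ⟨ha1, ha2, hac⟩ := hc
    rw [map_smul, fT_bv b hm (2 * m + 1) (by omega) (by omega), eig17_snd hm,
      eig17_mid a ha1 (by omega), eig17_mid c (by omega) (by omega),
      smul_smul, smul_smul, mul_comm, ← Nat.cast_add,
      show 2 * m - 6 + a + (2 * m - 6 + c) = 6 * m - 11 by omega]
  have h6 : fTorus17 m b (if 2 ≤ a ∧ a ≤ m ∧ a + c = 2 * m + 2 then
        (((-1 : ℂ)) ^ a * ((m + 1 - a : ℕ) : ℂ)) • basisVec b (2 * m + 2) else 0)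
      = (eig17 m a + eig17 m c) • (if 2 ≤ a ∧ a ≤ m ∧ a + c = 2 * m + 2 then
        (((-1 : ℂ)) ^ a * ((m + 1 - a : ℕ) : ℂ)) • basisVec b (2 * m + 2) else 0) := by
    refine key _ _ fun hc => ?_
    obtain ⟨ha1, ha2, hac⟩ := hc
    rw [map_smul, fT_bv b hm (2 * m + 2) (by omega) (by omega), eig17_last hm,
      eig17_mid a ha1 (by omega), eig17_mid c (by omega) (by omega),
      smul_smul, smul_smul, mul_comm, ← Nat.cast_add,
      show 2 * m - 6 + a + (2 * m - 6 + c) = 6 * m - 10 by omega]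
  rw [hb a c h, map_add, map_add, map_add, map_add, map_add, h1, h2, h3, h4, h5, h6,
    smul_add, smul_add, smul_add, smul_add, smul_add]

lemma deriv17 (hm : 4 ≤ m) (hb : IsNBasis m b) (x y : L) :
    fTorus17 m b ⁅x, y⁆ = ⁅fTorus17 m b x, y⁆ + ⁅x, fTorus17 m b y⁆ := by
  suffices h : ∀ i j : Fin (2 * m + 2),
      fTorus17 m b ⁅b i, b j⁆ = ⁅fTorus17 m b (b i), b j⁆ + ⁅b i, fTorus17 m b (b j)⁆ by
    let D : L →ₗ[ℂ] L →ₗ[ℂ] L := LinearMap.mk₂ ℂ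
      (fun x y => fTorus17 m b ⁅x, y⁆ - ⁅fTorus17 m b x, y⁆ - ⁅x, fTorus17 m b y⁆)
      (fun x₁ x₂ y => by simp only [add_lie, map_add]; abel)
      (fun r x y => by simp only [smul_lie, map_smul, smul_sub])
      (fun x y₁ y₂ => by simp only [lie_add, map_add]; abel)
      (fun r x y => by simp only [lie_smul, map_smul, smul_sub])
    have hD : D = 0 := by
      refine Basis.ext b fun i => ?_
      refine Basis.ext b fun j => ?_
      simp only [D, LinearMap.mk₂_apply, LinearMap.zero_apply]
      rw [h i j]
      abel
    have h3 : D x y = 0 := by rw [hD]; simp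
    simp only [D, LinearMap.mk₂_apply] at h3
    rw [sub_sub, sub_eq_zero] at h3
    rw [h3]
  intro i j
  rw [← basisVec_fin b i, ← basisVec_fin b j]
  have hi2 : i.val + 1 ≤ 2 * m + 2 := by omega
  have hj2 : j.val + 1 ≤ 2 * m + 2 := by omega
  rcases Nat.lt_trichotomy i.val j.val with hlt | heq | hgt
  · rw [lie_eig b hm hb _ _ (by omega), fT_bv b hm _ (by omega) hi2,
      fT_bv b hm _ (by omega) hj2, smul_lie, lie_smul, add_smul]
  · have : i = j := Fin.ext heq
    subst this
    rw [fT_bv b hm _ (by omega) hi2, smul_lie, lie_smul, lie_self]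
    simp
  · have hskew : ⁅basisVec b (i.val + 1), basisVec b (j.val + 1)⁆
        = -⁅basisVec b (j.val + 1), basisVec b (i.val + 1)⁆ := (lie_skew _ _).symm
    rw [fT_bv b hm _ (by omega) hi2, fT_bv b hm _ (by omega) hj2, smul_lie, lie_smul,
      hskew, map_neg, lie_eig b hm hb _ _ (by omega)]
    module

end Aux2

section Aux3
variable {L : Type} [LieRing L] [LieAlgebra ℂ L] {m : ℕ} (b : Basis (Fin (2 * m + 2)) ℂ L)

/-- Span of basis vectors of index (1-based) at least `k`. -/
noncomputable def SkS (k : ℕ) : Submodule ℂ L :=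
  Submodule.span ℂ {x | ∃ i : Fin (2 * m + 2), k ≤ i.val + 1 ∧ x = b i}

lemma SkS_antitone {k l : ℕ} (h : k ≤ l) : SkS b l ≤ SkS b k :=
  Submodule.span_mono (by rintro x ⟨i, hi, rfl⟩; exact ⟨i, by omega, rfl⟩)

lemma mem_SkS {t k : ℕ} (ht : t ≤ k) (h1 : 1 ≤ k) (h2 : k ≤ 2 * m + 2) :
    basisVec b k ∈ SkS b t := by
  rw [basisVec_eq b k h1 h2]
  exact Submodule.subset_span ⟨⟨k - 1, by omega⟩, show t ≤ k - 1 + 1 by omega, rfl⟩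

lemma SkS_one : (⊤ : Submodule ℂ L) ≤ SkS b 1 := by
  rw [← b.span_eq]
  exact Submodule.span_mono (by rintro x ⟨i, rfl⟩; exact ⟨i, by omega, rfl⟩)

lemma bracket_mem_lt (hm : 4 ≤ m) (hb : IsNBasis m b) (a c : ℕ) (h : a < c) :
    ⁅basisVec b a, basisVec b c⁆ ∈ SkS b (c + 1) := by
  have hite : ∀ (p : Prop) [Decidable p] (x : L),
      (p → x ∈ SkS b (c + 1)) → (if p then x else 0) ∈ SkS b (c + 1) := by
    intro p _ x hx
    split_ifs with hp
    · exact hx hp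
    · exact zero_mem _
  rw [hb a c h]
  refine add_mem (add_mem (add_mem (add_mem (add_mem
    (hite _ _ fun hc => mem_SkS b (by omega) (by omega) (by omega))
    (hite _ _ fun hc => mem_SkS b (by omega) (by omega) (by omega)))
    (hite _ _ fun hc => mem_SkS b (by omega) (by omega) (by omega)))
    (hite _ _ fun hc => mem_SkS b (by omega) (by omega) (by omega)))
    (hite _ _ fun hc => Submodule.smul_mem _ _ (mem_SkS b (by omega) (by omega) (by omega))))
    (hite _ _ fun hc => Submodule.smul_mem _ _ (mem_SkS b (by omega) (by omega) (by omega)))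

lemma bracket_mem_fin (hm : 4 ≤ m) (hb : IsNBasis m b) (i j : Fin (2 * m + 2)) :
    ⁅b i, b j⁆ ∈ SkS b (j.val + 2) := by
  rw [← basisVec_fin b i, ← basisVec_fin b j]
  rcases Nat.lt_trichotomy i.val j.val with hlt | heq | hgt
  · exact bracket_mem_lt b hm hb _ _ (by omega)
  · have : (i : ℕ) + 1 = (j : ℕ) + 1 := by omega
    rw [this, lie_self]
    exact zero_mem _
  · rw [(lie_skew _ _).symm]
    exact neg_mem (SkS_antitone b (by omega) (bracket_mem_lt b hm hb _ _ (by omega)))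

lemma lie_mem_SkS (hm : 4 ≤ m) (hb : IsNBasis m b) (x : L) (k : ℕ) (n : L)
    (hn : n ∈ SkS b k) : ⁅x, n⁆ ∈ SkS b (k + 1) := by
  induction hn using Submodule.span_induction with
  | mem z hz =>
    obtain ⟨j, hj, rfl⟩ := hz
    have hx : x ∈ Submodule.span ℂ (Set.range b) := by rw [b.span_eq]; trivial
    induction hx using Submodule.span_induction with
    | mem w hw =>
      obtain ⟨i, rfl⟩ := hw
      exact SkS_antitone b (by omega) (bracket_mem_fin b hm hb i j)
    | zero => rw [zero_lie]; exact zero_mem _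
    | add u v hu hv ihu ihv => rw [add_lie]; exact add_mem ihu ihv
    | smul r u hu ihu => rw [smul_lie]; exact Submodule.smul_mem _ _ ihu
  | zero => rw [lie_zero]; exact zero_mem _
  | add u v hu hv ihu ihv => rw [lie_add]; exact add_mem ihu ihv
  | smul r u hu ihu => rw [lie_smul]; exact Submodule.smul_mem _ _ ihu

lemma L_nilpotent (hm : 4 ≤ m) (hb : IsNBasis m b) : LieModule.IsNilpotent L L := by
  have hle : ∀ k : ℕ, ∀ x : L, x ∈ LieModule.lowerCentralSeries ℂ L L k → x ∈ SkS b (k + 1) := by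
    intro k
    induction k with
    | zero =>
      intro x hx
      exact SkS_one b trivial
    | succ k ih =>
      intro x hx
      rw [LieModule.lowerCentralSeries_succ, ← LieSubmodule.mem_toSubmodule,
        LieSubmodule.lieIdeal_oper_eq_linear_span] at hx
      induction hx using Submodule.span_induction with
      | mem z hz =>
        obtain ⟨y, n, rfl⟩ := hz
        exact lie_mem_SkS b hm hb (y : L) (k + 1) (n : L) (ih n n.property)
      | zero => exact zero_mem _
      | add u v hu hv ihu ihv => exact add_mem ihu ihv
      | smul r u hu ihu => exact Submodule.smul_mem _ _ ihu
  refine (LieModule.isNilpotent_iff ℂ L L).mpr ⟨2 * m + 2, ?_⟩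
  rw [LieSubmodule.eq_bot_iff]
  intro z hz
  have h1 : z ∈ SkS b (2 * m + 3) := hle (2 * m + 2) z hz
  have h2 : SkS b (2 * m + 3) ≤ (⊥ : Submodule ℂ L) := by
    rw [SkS, Submodule.span_le]
    rintro x ⟨i, hi, rfl⟩
    exact absurd i.isLt (by omega)
  simpa using h2 h1

lemma lie_center (hm : 4 ≤ m) (hb : IsNBasis m b) (x : L) :
    ⁅x, basisVec b (2 * m + 2)⁆ = 0 := by
  have hx : x ∈ Submodule.span ℂ (Set.range b) := by rw [b.span_eq]; trivial
  induction hx using Submodule.span_induction with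
  | mem w hw =>
    obtain ⟨i, rfl⟩ := hw
    rw [← basisVec_fin b i]
    rcases Nat.lt_or_ge (i.val + 1) (2 * m + 2) with hlt | hge
    · rw [hb _ _ hlt, if_neg (by omega), if_neg (by omega), if_neg (by omega), if_neg (by omega),
        if_neg (by omega), if_neg (by omega)]
      simp
    · have : (i : ℕ) + 1 = 2 * m + 2 := by omega
      rw [this, lie_self]
  | zero => rw [zero_lie]
  | add u v hu hv ihu ihv => rw [add_lie, ihu, ihv, add_zero]
  | smul r u hu ihu => rw [smul_lie, ihu, smul_zero]

end Aux3

/-- For `m ≥ 4`: `f` is a derivation of `𝔫 = 𝔤^{4,1}_{(m,m-1)} + ψ̄_{2,2m-5}`, and the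
semidirect product `𝔯^{4,1,2m-5}_{(m,m-1)} = 𝔫 ⋊ ℂf` (any Lie algebra `R` generated by
an embedded copy of `𝔫` together with an element `T` acting on it by `f`) is a
`(2m+3)`-dimensional solvable non-nilpotent Lie algebra whose nilradical is `𝔫`. -/
theorem stmt_17 (L : Type) [LieRing L] [LieAlgebra ℂ L] (m : ℕ) (hm : 4 ≤ m)
    (b : Basis (Fin (2 * m + 2)) ℂ L) (hb : IsNBasis m b) :
    (∀ x y : L, fTorus17 m b ⁅x, y⁆ = ⁅fTorus17 m b x, y⁆ + ⁅x, fTorus17 m b y⁆) ∧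
    ∀ (R : Type) [LieRing R] [LieAlgebra ℂ R],
      ∀ (ι : L →ₗ[ℂ] R) (T : R),
        Function.Injective ι →
        (∀ x y : L, ι ⁅x, y⁆ = ⁅ι x, ι y⁆) →
        (∀ x : L, ⁅T, ι x⁆ = ι (fTorus17 m b x)) →
        T ∉ LinearMap.range ι →
        Submodule.span ℂ (Set.range ι ∪ {T}) = ⊤ →
        (finrank ℂ R = 2 * m + 3 ∧
         LieAlgebra.IsSolvable R ∧
         ¬ LieModule.IsNilpotent R R ∧
         -- the nilradical is the image of L, a copy of 𝔫
         ∃ N : LieIdeal ℂ R, (N : Submodule ℂ R) = LinearMap.range ι ∧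
           LieModule.IsNilpotent N N ∧
           (∀ J : LieIdeal ℂ R, LieModule.IsNilpotent J J → J ≤ N) ∧
           Nonempty (N ≃ₗ⁅ℂ⁆ L)) := by
  refine ⟨deriv17 b hm hb, ?_⟩
  intro R _ _ ι T hinj hι hT hTnot hspan
  -- The span of the image and T is everything
  have htop : (⊤ : Submodule ℂ R) = LinearMap.range ι ⊔ (ℂ ∙ T) := by
    rw [← hspan, Submodule.span_union, ← LinearMap.coe_range ι, Submodule.span_eq]
  -- every bracket lands in the range of ι
  have hstep1 : ∀ g ∈ Set.range ⇑ι ∪ {T}, ∀ y : R, ⁅g, y⁆ ∈ LinearMap.range ι := by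
    intro g hg y
    have hy : y ∈ Submodule.span ℂ (Set.range ⇑ι ∪ {T}) := by rw [hspan]; trivial
    induction hy using Submodule.span_induction with
    | mem z hz =>
      rcases hg with ⟨x, rfl⟩ | hgT
      · rcases hz with ⟨w, rfl⟩ | hzT
        · exact ⟨⁅x, w⁆, (hι x w)⟩
        · rw [Set.mem_singleton_iff] at hzT; subst hzT
          refine ⟨-(fTorus17 m b x), ?_⟩
          rw [map_neg, ← hT, ← lie_skew, neg_neg]
      · rw [Set.mem_singleton_iff] at hgT; subst hgT
        rcases hz with ⟨w, rfl⟩ | hzT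
        · exact ⟨fTorus17 m b w, (hT w).symm⟩
        · rw [Set.mem_singleton_iff] at hzT; subst hzT
          exact ⟨0, by rw [map_zero, lie_self]⟩
    | zero => rw [lie_zero]; exact zero_mem _
    | add u v hu hv ihu ihv => rw [lie_add]; exact add_mem ihu ihv
    | smul r u hu ihu => rw [lie_smul]; exact Submodule.smul_mem _ _ ihu
  have hbr : ∀ x y : R, ⁅x, y⁆ ∈ LinearMap.range ι := by
    intro x y
    have hx : x ∈ Submodule.span ℂ (Set.range ⇑ι ∪ {T}) := by rw [hspan]; trivial
    induction hx using Submodule.span_induction with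
    | mem z hz => exact hstep1 z hz y
    | zero => rw [zero_lie]; exact zero_mem _
    | add u v hu hv ihu ihv => rw [add_lie]; exact add_mem ihu ihv
    | smul r u hu ihu => rw [smul_lie]; exact Submodule.smul_mem _ _ ihu
  -- the ideal N
  set N : LieIdeal ℂ R :=
    { LinearMap.range ι with
      lie_mem := fun {x y} _ => hbr x y } with hNdef
  have hNcoe : (N : Submodule ℂ R) = LinearMap.range ι := rfl
  have hmemN : ∀ w : R, w ∈ N ↔ w ∈ LinearMap.range ι := fun w => Iff.rfl
  -- the Lie equivalence L ≃ N
  let φ : L →ₗ⁅ℂ⁆ N :=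
    { toFun := fun x => ⟨ι x, (hmemN (ι x)).mpr ⟨x, rfl⟩⟩
      map_add' := fun x y => Subtype.ext (by simp)
      map_smul' := fun c x => Subtype.ext (by simp)
      map_lie' := fun {x y} => Subtype.ext (hι x y) }
  have hφbij : Function.Bijective φ := by
    constructor
    · intro x y hxy
      exact hinj (congrArg Subtype.val hxy)
    · rintro ⟨z, hz⟩
      obtain ⟨w, rfl⟩ := (hmemN z).mp hz
      exact ⟨w, rfl⟩
  let eLN : L ≃ₗ⁅ℂ⁆ N := LieEquiv.ofBijective φ hφbij
  have hLnil : LieModule.IsNilpotent L L := L_nilpotent b hm hb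
  have hNnil : LieModule.IsNilpotent N N := by
    haveI := hLnil
    exact eLN.nilpotent_iff_equiv_nilpotent.mp hLnil
  -- dimension count
  haveI : Module.Finite ℂ L := Module.Finite.of_basis b
  haveI : FiniteDimensional ℂ (LinearMap.range ι) :=
    Module.Finite.equiv (LinearEquiv.ofInjective ι hinj)
  have hT0 : T ≠ 0 := fun h => hTnot (h ▸ zero_mem _)
  have hrange : finrank ℂ (LinearMap.range ι) = 2 * m + 2 := by
    rw [← (LinearEquiv.ofInjective ι hinj).finrank_eq, finrank_eq_card_basis b,
      Fintype.card_fin]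
  have hinf : LinearMap.range ι ⊓ (ℂ ∙ T) = ⊥ := by
    rw [eq_bot_iff]
    rintro x ⟨hx1, hx2⟩
    obtain ⟨c, rfl⟩ := Submodule.mem_span_singleton.mp hx2
    by_cases hc : c = 0
    · simp [hc]
    · exact absurd (by
        have : T = c⁻¹ • (c • T) := by rw [smul_smul, inv_mul_cancel₀ hc, one_smul]
        rw [this]
        exact Submodule.smul_mem _ _ hx1) hTnot
  have hdim : finrank ℂ R = 2 * m + 3 := by
    have hsum := Submodule.finrank_sup_add_finrank_inf_eq (LinearMap.range ι) (ℂ ∙ T)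
    rw [hinf, finrank_bot, add_zero, ← htop, finrank_top, hrange,
      finrank_span_singleton hT0] at hsum
    omega
  -- solvability
  have hsolv : LieAlgebra.IsSolvable R := by
    haveI := hNnil
    haveI : LieAlgebra.IsSolvable N := inferInstance
    obtain ⟨k, hk⟩ := LieAlgebra.IsSolvable.solvable (R := ℂ) (L := N)
    have h1 : LieAlgebra.derivedSeriesOfIdeal ℂ R k N = ⊥ :=
      (LieIdeal.derivedSeries_eq_bot_iff N k).mp hk
    have hd1 : LieAlgebra.derivedSeries ℂ R 1 ≤ N := by
      rw [LieAlgebra.derivedSeries_def, LieAlgebra.derivedSeriesOfIdeal_succ,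
        LieAlgebra.derivedSeriesOfIdeal_zero, LieSubmodule.lieIdeal_oper_eq_span,
        LieSubmodule.lieSpan_le]
      rintro z ⟨x, y, rfl⟩
      exact hbr x y
    refine LieAlgebra.IsSolvable.mk (R := ℂ) (k := k + 1) ?_
    have hcalc : LieAlgebra.derivedSeries ℂ R (k + 1)
        ≤ LieAlgebra.derivedSeriesOfIdeal ℂ R k N := by
      calc LieAlgebra.derivedSeries ℂ R (k + 1)
          = LieAlgebra.derivedSeriesOfIdeal ℂ R k (LieAlgebra.derivedSeries ℂ R 1) := by
            rw [LieAlgebra.derivedSeries_def, LieAlgebra.derivedSeriesOfIdeal_add,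
              ← LieAlgebra.derivedSeries_def]
        _ ≤ LieAlgebra.derivedSeriesOfIdeal ℂ R k N :=
            LieAlgebra.derivedSeriesOfIdeal_mono hd1 k
    rw [h1] at hcalc
    exact le_bot_iff.mp hcalc
  -- non-nilpotency
  have hbv1ne : ι (basisVec b 1) ≠ 0 := by
    intro h
    have h0 : basisVec b 1 = 0 := hinj (by rw [h, map_zero])
    rw [basisVec_eq b 1 le_rfl (by omega)] at h0
    exact b.ne_zero _ h0
  have hu1 : ⁅T, ι (basisVec b 1)⁆ = ι (basisVec b 1) := by
    rw [hT, fT_bv b hm 1 le_rfl (by omega), eig17_one, one_smul]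
  have hnotnil : ¬ LieModule.IsNilpotent R R := by
    intro hnil
    obtain ⟨k, hk⟩ := (LieModule.isNilpotent_iff ℂ R R).mp hnil
    have hmem : ∀ k, ι (basisVec b 1) ∈ LieModule.lowerCentralSeries ℂ R R k := by
      intro k
      induction k with
      | zero => exact LieSubmodule.mem_top _
      | succ k ih =>
        rw [LieModule.lowerCentralSeries_succ]
        have := LieSubmodule.lie_mem_lie (LieSubmodule.mem_top T) ih
        rwa [hu1] at this
    have := hmem k
    rw [hk, LieSubmodule.mem_bot] at this
    exact hbv1ne this
  -- maximality of N among nilpotent ideals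
  have hmax : ∀ J : LieIdeal ℂ R, LieModule.IsNilpotent J J → J ≤ N := by
    intro J hJnil
    by_contra hnotle
    rw [SetLike.le_def] at hnotle
    push_neg at hnotle
    obtain ⟨z, hzJ, hzN⟩ := hnotle
    have hz : z ∈ (⊤ : Submodule ℂ R) := trivial
    rw [htop] at hz
    obtain ⟨y, hy, t, ht, rfl⟩ := Submodule.mem_sup.mp hz
    obtain ⟨x, rfl⟩ := hy
    obtain ⟨c, rfl⟩ := Submodule.mem_span_singleton.mp ht
    have hc : c ≠ 0 := by
      intro h
      subst h
      exact hzN ((hmemN _).mpr (by rw [zero_smul, add_zero]; exact ⟨x, rfl⟩))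
    set u : R := ι (basisVec b (2 * m + 2)) with hudef
    have hcen : ∀ w : L, ⁅ι w, u⁆ = 0 := by
      intro w
      rw [hudef, ← hι, lie_center b hm hb w, map_zero]
    have hTu : ⁅T, u⁆ = ((6 * m - 10 : ℕ) : ℂ) • u := by
      rw [hudef, hT, fT_bv b hm (2 * m + 2) (by omega) le_rfl, eig17_last hm, map_smul]
    set lam : ℂ := c * ((6 * m - 10 : ℕ) : ℂ) with hlamdef
    have hlam : lam ≠ 0 := mul_ne_zero hc (Nat.cast_ne_zero.mpr (by omega))
    have hzu : ⁅ι x + c • T, u⁆ = lam • u := by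
      rw [add_lie, smul_lie, hcen, hTu, zero_add, smul_smul, hlamdef]
    have huJ : u ∈ J := by
      have h1 : ⁅ι x + c • T, u⁆ ∈ J := by
        rw [← lie_skew]
        exact neg_mem (J.lie_mem hzJ)
      rw [hzu] at h1
      have : u = lam⁻¹ • (lam • u) := by rw [smul_smul, inv_mul_cancel₀ hlam, one_smul]
      rw [this]
      exact Submodule.smul_mem _ _ h1
    have hune : u ≠ 0 := by
      intro h
      have h1 : ι (basisVec b (2 * m + 2)) = 0 := h
      have h0 : basisVec b (2 * m + 2) = 0 := hinj (h1.trans (map_zero ι).symm)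
      rw [basisVec_eq b _ (by omega) le_rfl] at h0
      exact b.ne_zero _ h0
    set zJ : J := ⟨ι x + c • T, hzJ⟩ with hzJdef
    set uJ : J := ⟨u, huJ⟩ with huJdef
    have hbJ : ⁅zJ, uJ⁆ = lam • uJ := by
      apply Subtype.ext
      rw [LieSubmodule.coe_smul]
      exact hzu
    obtain ⟨k, hk⟩ := (LieModule.isNilpotent_iff ℂ J J).mp hJnil
    have hmem : ∀ k, uJ ∈ LieModule.lowerCentralSeries ℂ J J k := by
      intro k
      induction k with
      | zero => exact LieSubmodule.mem_top _
      | succ k ih =>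
        rw [LieModule.lowerCentralSeries_succ]
        have h1 := LieSubmodule.lie_mem_lie (LieSubmodule.mem_top zJ) ih
        rw [hbJ] at h1
        have h2 : uJ = lam⁻¹ • (lam • uJ) := by
          rw [smul_smul, inv_mul_cancel₀ hlam, one_smul]
        rw [h2]
        exact Submodule.smul_mem _ _ h1
    have := hmem k
    rw [hk, LieSubmodule.mem_bot] at this
    exact hune (congrArg Subtype.val this)
  exact ⟨hdim, hsolv, hnotnil, N, hNcoe, hNnil, hmax, ⟨eLN.symm⟩⟩
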